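/- arXiv:1511.09070 — 6 statements merged into one kernel-verified Lean document; each statement's English description precedes it below -/
import Mathlib

section
/- (Equivalence of the two descriptions of the superposition-coding rate region, Theorem 4.) Let a₁, a₂, a_z, b₁, b_z be nonnegative real numbers with b₁ ≥ b_z (these play the roles of I(U;Y₁), I(U;Y₂), I(U;Z), I(V;Y₁|U), I(V;Z|U)). For nonnegative reals R₁, R₂ the following are equivalent: (A) there exist R₁s, R₁k ≥ 0 with R₁ = R₁s + R₁k such that, setting R_k := max{R₁k + R₂, max{R₁k, R₂} + a_z}, one has R_k ≤ a₂, R₁s ≤ b₁ − b_z, and R_k + R₁s ≤ a₁ + b₁ − b_z; (B) R₂ ≤ a₂ − a_z, R₁ ≤ (b₁ − b_z) + a₂ − a_z, max{R₁, R₂} ≤ (b₁ − b_z) + a₁ − a_z, and R₁ + R₂ ≤ (b₁ − b_z) + min{a₁, a₂}. -/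
/-!
Substituting `R₁s = R₁ - R₁k` leaves three constraints free of `R₁k` together with three lower
bounds `0, R₁ - (b₁ - b_z), R₁ + R₂ + a_z - (a₁ + b₁ - b_z)` and three upper bounds
`R₁, a₂ - R₂, a₂ - a_z` on `R₁k`. By Fourier–Motzkin, such an `R₁k` exists iff every lower bound
is at most every upper bound; the resulting twelve inequalities reduce to (B) by linear arithmetic,
using `b₁ ≥ b_z` and the nonnegativity of `a_z, R₁, R₂`.
-/

theorem max_add_max_add_le_iff {α : Type*} [AddCommGroup α] [LinearOrder α]
    [IsOrderedAddMonoid α] {k r z t : α} :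
    max (k + r) (max k r + z) ≤ t ↔ k + r ≤ t ∧ k + z ≤ t ∧ r + z ≤ t := by
  simp only [max_le_iff, max_add]

theorem Finset.exists_between_iff_forall_le {α : Type*} [LinearOrder α] {L U : Finset α}
    (hL : L.Nonempty) :
    (∃ k, (∀ l ∈ L, l ≤ k) ∧ ∀ u ∈ U, k ≤ u) ↔ ∀ l ∈ L, ∀ u ∈ U, l ≤ u :=
  ⟨fun ⟨_, hlk, hku⟩ l hl u hu => (hlk l hl).trans (hku u hu),
    fun h => ⟨L.max' hL, fun _ hl => L.le_max' _ hl, h _ (L.max'_mem hL)⟩⟩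

theorem exists_rate_split_iff (a₁ a₂ az b₁ bz R₁ R₂ : ℝ) :
    (∃ R₁s R₁k : ℝ, 0 ≤ R₁s ∧ 0 ≤ R₁k ∧ R₁ = R₁s + R₁k ∧
        max (R₁k + R₂) (max R₁k R₂ + az) ≤ a₂ ∧
        R₁s ≤ b₁ - bz ∧
        max (R₁k + R₂) (max R₁k R₂ + az) + R₁s ≤ a₁ + b₁ - bz) ↔
    (R₂ + az ≤ a₂ ∧ R₁ + R₂ ≤ a₁ + b₁ - bz ∧ R₁ + az ≤ a₁ + b₁ - bz) ∧
      ∃ R₁k : ℝ,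
        (∀ l ∈ ({0, R₁ - (b₁ - bz), R₁ + R₂ + az - (a₁ + b₁ - bz)} : Finset ℝ), l ≤ R₁k) ∧
        ∀ u ∈ ({R₁, a₂ - R₂, a₂ - az} : Finset ℝ), R₁k ≤ u := by
  simp only [Finset.mem_insert, Finset.mem_singleton, forall_eq_or_imp, forall_eq]
  constructor
  · rintro ⟨s, k, hs, hk, rfl, hkey, hs_le, hsum⟩
    obtain ⟨hkR₂, hkaz, hR₂az⟩ := max_add_max_add_le_iff.1 hkey
    obtain ⟨hkR₂', hkaz', hR₂az'⟩ := max_add_max_add_le_iff.1 (le_sub_iff_add_le.2 hsum)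
    refine ⟨⟨hR₂az, ?_, ?_⟩, k, ⟨hk, ?_, ?_⟩, ?_, ?_, ?_⟩ <;> linarith
  · rintro ⟨⟨hR₂az, hR₁R₂, hR₁az⟩, k, ⟨hk, hk_ge, hk_ge'⟩, hk_le, hkR₂, hkaz⟩
    refine ⟨R₁ - k, k, by linarith, hk, by ring, max_add_max_add_le_iff.2 ⟨?_, ?_, hR₂az⟩,
      by linarith, le_sub_iff_add_le.1 (max_add_max_add_le_iff.2 ⟨?_, ?_, ?_⟩)⟩ <;> linarith

theorem superposition_region_equiv_general
    (a₁ a₂ az b₁ bz : ℝ) (haz : 0 ≤ az)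
    (hbb : bz ≤ b₁)
    (R₁ R₂ : ℝ) (hR₁ : 0 ≤ R₁) (hR₂ : 0 ≤ R₂) :
    (∃ R₁s R₁k : ℝ, 0 ≤ R₁s ∧ 0 ≤ R₁k ∧ R₁ = R₁s + R₁k ∧
        max (R₁k + R₂) (max R₁k R₂ + az) ≤ a₂ ∧
        R₁s ≤ b₁ - bz ∧
        max (R₁k + R₂) (max R₁k R₂ + az) + R₁s ≤ a₁ + b₁ - bz) ↔
    (R₂ ≤ a₂ - az ∧
      R₁ ≤ (b₁ - bz) + a₂ - az ∧
      max R₁ R₂ ≤ (b₁ - bz) + a₁ - az ∧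
      R₁ + R₂ ≤ (b₁ - bz) + min a₁ a₂) := by
  rw [exists_rate_split_iff, Finset.exists_between_iff_forall_le (Finset.insert_nonempty _ _)]
  simp only [Finset.mem_insert, Finset.mem_singleton, forall_eq_or_imp, forall_eq, max_le_iff,
    le_min_iff, add_min]
  constructor
  · rintro ⟨⟨h₁, h₂, h₃⟩, -, ⟨-, h₄, h₅⟩, h₆, -, -⟩
    refine ⟨?_, ?_, ⟨?_, ?_⟩, ?_, ?_⟩ <;> linarith
  · rintro ⟨hR₂_le, hR₁_le, ⟨hR₁_le', hR₂_le'⟩, hsum₁, hsum₂⟩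
    refine ⟨⟨?_, ?_, ?_⟩, ⟨hR₁, ?_, ?_⟩, ⟨?_, ?_, ?_⟩, ?_, ?_, ?_⟩ <;> linarith

/-- Equivalence of the two descriptions of the superposition-coding rate region
(Theorem 4): the split form (A) in terms of `R₁ = R₁s + R₁k` is equivalent to the
direct form (B) in terms of `(R₁, R₂)`.  Here `a₁, a₂, a_z, b₁, b_z` play the roles
of `I(U;Y₁), I(U;Y₂), I(U;Z), I(V;Y₁|U), I(V;Z|U)` with `b₁ ≥ b_z`. -/
theorem superposition_region_equiv
    (a₁ a₂ az b₁ bz : ℝ) (ha₁ : 0 ≤ a₁) (ha₂ : 0 ≤ a₂) (haz : 0 ≤ az)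
    (hb₁ : 0 ≤ b₁) (hbz : 0 ≤ bz) (hbb : bz ≤ b₁)
    (R₁ R₂ : ℝ) (hR₁ : 0 ≤ R₁) (hR₂ : 0 ≤ R₂) :
    (∃ R₁s R₁k : ℝ, 0 ≤ R₁s ∧ 0 ≤ R₁k ∧ R₁ = R₁s + R₁k ∧
        max (R₁k + R₂) (max R₁k R₂ + az) ≤ a₂ ∧
        R₁s ≤ b₁ - bz ∧
        max (R₁k + R₂) (max R₁k R₂ + az) + R₁s ≤ a₁ + b₁ - bz) ↔
    (R₂ ≤ a₂ - az ∧
      R₁ ≤ (b₁ - bz) + a₂ - az ∧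
      max R₁ R₂ ≤ (b₁ - bz) + a₁ - az ∧
      R₁ + R₂ ≤ (b₁ - bz) + min a₁ a₂) :=
  superposition_region_equiv_general a₁ a₂ az b₁ bz haz hbb R₁ R₂ hR₁ hR₂
end

section
/- (Corollary 4: the looser Gaussian outer bound follows from the Theorem 9 outer bound, with the same α.) For x ≥ 0, let C(x) = (1/2)·log₂(1+x). Let s₁, s₂, s_e be real numbers with 0 < s₁ ≤ s₂ ≤ s_e, let P > 0, α, γ ∈ [0, 1], and R₁, R₂ ≥ 0. Suppose R₂ ≤ C((1−α)P/(αP + s₂)) − C((1−α)P/(αP + s_e)) and R₁ ≤ C(α(1−γ)P/(γαP + s₁)) − C(α(1−γ)P/(γαP + s_e)) + min{R₂, C((1−γα)P/(γαP + s_e))}. Then: R₁ ≤ C(αP/s₁) − C(αP/s_e) + C((1−α)P/(αP + s₂)) − C((1−α)P/(αP + s_e)), R₂ ≤ C((1−α)P/(αP + s₂)) − C((1−α)P/(αP + s_e)), and R₁ + R₂ ≤ C(αP/s₁) + C((1−α)P/(αP + s₂)). -/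
/-- The Gaussian capacity function `C(x) = (1/2)·log₂(1+x)`. -/
noncomputable def Cfun (x : ℝ) : ℝ := (1 / 2) * Real.logb 2 (1 + x)

lemma Cfun_nonneg {x : ℝ} (hx : 0 ≤ x) : 0 ≤ Cfun x := by
  have : (0:ℝ) ≤ Real.logb 2 (1 + x) :=
    Real.logb_nonneg one_lt_two (by linarith)
  unfold Cfun; linarith

lemma Cfun_mono {x y : ℝ} (hx : 0 ≤ x) (hxy : x ≤ y) : Cfun x ≤ Cfun y := by
  have hxy' : 1 + x ≤ 1 + y := by linarith
  have : Real.logb 2 (1 + x) ≤ Real.logb 2 (1 + y) :=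
    Real.logb_le_logb_of_le one_lt_two (by linarith) hxy'
  unfold Cfun; linarith

lemma Cfun_chain {a b s : ℝ} (ha : 0 ≤ a) (hb : 0 ≤ b) (hs : 0 < s) :
    Cfun ((a + b) / s) = Cfun (a / (b + s)) + Cfun (b / s) := by
  have hbs : 0 < b + s := by linarith
  have e1 : 1 + (a + b) / s = (a + b + s) / s := by field_simp; ring
  have e2 : 1 + a / (b + s) = (a + b + s) / (b + s) := by field_simp; ring
  have e3 : 1 + b / s = (b + s) / s := by field_simp; ring
  have h4 : (a + b + s) / s = ((a + b + s) / (b + s)) * ((b + s) / s) := by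
    field_simp
  unfold Cfun
  rw [e1, e2, e3, h4, Real.logb_mul (by positivity) (by positivity)]
  ring

/-- Corollary 4: the looser Gaussian outer bound (53) follows from the Theorem 9
outer bound (38)–(39), with the same `α`. -/
theorem looser_outer_bound
    (s₁ s₂ se P α γ R₁ R₂ : ℝ)
    (hs₁ : 0 < s₁) (h12 : s₁ ≤ s₂) (h2e : s₂ ≤ se) (hP : 0 < P)
    (hα : α ∈ Set.Icc (0 : ℝ) 1) (hγ : γ ∈ Set.Icc (0 : ℝ) 1)
    (hR₁0 : 0 ≤ R₁) (hR₂0 : 0 ≤ R₂)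
    (hR₂ : R₂ ≤ Cfun ((1 - α) * P / (α * P + s₂)) - Cfun ((1 - α) * P / (α * P + se)))
    (hR₁ : R₁ ≤ Cfun (α * (1 - γ) * P / (γ * α * P + s₁))
        - Cfun (α * (1 - γ) * P / (γ * α * P + se))
        + min R₂ (Cfun ((1 - γ * α) * P / (γ * α * P + se)))) :
    R₁ ≤ Cfun (α * P / s₁) - Cfun (α * P / se)
        + Cfun ((1 - α) * P / (α * P + s₂)) - Cfun ((1 - α) * P / (α * P + se)) ∧
    R₂ ≤ Cfun ((1 - α) * P / (α * P + s₂)) - Cfun ((1 - α) * P / (α * P + se)) ∧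
    R₁ + R₂ ≤ Cfun (α * P / s₁) + Cfun ((1 - α) * P / (α * P + s₂)) := by
  obtain ⟨hα0, hα1⟩ := hα
  obtain ⟨hγ0, hγ1⟩ := hγ
  have hse : (0:ℝ) < se := by linarith
  have ha1 : 0 ≤ α * (1 - γ) * P := mul_nonneg (mul_nonneg hα0 (by linarith)) hP.le
  have hb1 : 0 ≤ γ * α * P := mul_nonneg (mul_nonneg hγ0 hα0) hP.le
  have ha2 : 0 ≤ (1 - γ * α) * P := by
    have : γ * α ≤ 1 := by nlinarith
    nlinarith
  have hb2 : 0 ≤ (1 - α) * P := by nlinarith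
  have hc2 : 0 ≤ α * P := mul_nonneg hα0 hP.le
  -- chain identities
  have eq1 : Cfun (α * P / s₁)
      = Cfun (α * (1 - γ) * P / (γ * α * P + s₁)) + Cfun (γ * α * P / s₁) := by
    have := Cfun_chain ha1 hb1 hs₁
    rw [show α * (1 - γ) * P + γ * α * P = α * P by ring] at this
    exact this
  have eq2 : Cfun (α * P / se)
      = Cfun (α * (1 - γ) * P / (γ * α * P + se)) + Cfun (γ * α * P / se) := by
    have := Cfun_chain ha1 hb1 hse
    rw [show α * (1 - γ) * P + γ * α * P = α * P by ring] at this
    exact this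
  have eq3 : Cfun (P / se)
      = Cfun ((1 - γ * α) * P / (γ * α * P + se)) + Cfun (γ * α * P / se) := by
    have := Cfun_chain ha2 hb1 hse
    rw [show (1 - γ * α) * P + γ * α * P = P by ring] at this
    exact this
  have eq4 : Cfun (P / se)
      = Cfun ((1 - α) * P / (α * P + se)) + Cfun (α * P / se) := by
    have := Cfun_chain hb2 hc2 hse
    rw [show (1 - α) * P + α * P = P by ring] at this
    exact this
  -- monotonicity and nonnegativity facts
  have mono1 : Cfun (γ * α * P / se) ≤ Cfun (γ * α * P / s₁) := by
    apply Cfun_mono (div_nonneg hb1 hse.le)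
    apply div_le_div_of_nonneg_left hb1 hs₁ (by linarith)
  have nn1 : 0 ≤ Cfun (γ * α * P / s₁) := Cfun_nonneg (div_nonneg hb1 hs₁.le)
  have hmin1 : min R₂ (Cfun ((1 - γ * α) * P / (γ * α * P + se))) ≤ R₂ :=
    min_le_left _ _
  have hmin2 : min R₂ (Cfun ((1 - γ * α) * P / (γ * α * P + se)))
      ≤ Cfun ((1 - γ * α) * P / (γ * α * P + se)) := min_le_right _ _
  refine ⟨by linarith, hR₂, by linarith⟩
end

section
/- (Appendix L: characterization of condition (60).) For x ≥ 0, let C(x) = (1/2)·log₂(1+x). Let s₂, s_e, P be real numbers with 0 < s₂ ≤ s_e, P > 0 and P + 2s₂ ≥ s_e, and let α ∈ [0, 1]. Then C((1−α)P/(αP + s₂)) − C((1−α)P/(αP + s_e)) ≤ C((1−α)P/(αP + s_e)) holds if and only if α ≥ (s_e − s₂)²/(P(P + s₂)) − s₂/P. -/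
/-- Appendix L: characterization of condition (60).  For `0 < s₂ ≤ s_e`, `P > 0` and
`P + 2s₂ ≥ se`, the inequality
`C((1−α)P/(αP+s₂)) − C((1−α)P/(αP+s_e)) ≤ C((1−α)P/(αP+s_e))`
holds iff `α ≥ (s_e−s₂)²/(P(P+s₂)) − s₂/P`. -/
theorem condition60_characterization
    (s₂ se P α : ℝ) (hs₂ : 0 < s₂) (h2e : s₂ ≤ se) (hP : 0 < P)
    (hPe : P + 2 * s₂ ≥ se) (hα : α ∈ Set.Icc (0 : ℝ) 1) :
    (Cfun ((1 - α) * P / (α * P + s₂)) - Cfun ((1 - α) * P / (α * P + se))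
        ≤ Cfun ((1 - α) * P / (α * P + se))) ↔
    α ≥ (se - s₂) ^ 2 / (P * (P + s₂)) - s₂ / P := by
  obtain ⟨hα0, hα1⟩ := hα
  have hse : 0 < se := lt_of_lt_of_le hs₂ h2e
  have hd2 : 0 < α * P + s₂ := by positivity
  have hde : 0 < α * P + se := by positivity
  have hP2 : 0 < P + s₂ := by linarith
  have hPse : 0 < P + se := by linarith
  -- rewrite the capacities
  have e2 : (1 : ℝ) + (1 - α) * P / (α * P + s₂) = (P + s₂) / (α * P + s₂) := by
    field_simp; ring
  have ee : (1 : ℝ) + (1 - α) * P / (α * P + se) = (P + se) / (α * P + se) := by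
    field_simp; ring
  have hA : 0 < (P + s₂) / (α * P + s₂) := by positivity
  have hB : 0 < (P + se) / (α * P + se) := by positivity
  have key : (Cfun ((1 - α) * P / (α * P + s₂)) - Cfun ((1 - α) * P / (α * P + se))
        ≤ Cfun ((1 - α) * P / (α * P + se))) ↔
      (P + s₂) / (α * P + s₂) ≤ ((P + se) / (α * P + se)) ^ 2 := by
    rw [Cfun, Cfun, e2, ee]
    rw [show (1/2 : ℝ) * Real.logb 2 ((P + s₂) / (α * P + s₂)) -
        (1/2) * Real.logb 2 ((P + se) / (α * P + se)) ≤
        (1/2) * Real.logb 2 ((P + se) / (α * P + se)) ↔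
        Real.logb 2 ((P + s₂) / (α * P + s₂)) ≤
        Real.logb 2 (((P + se) / (α * P + se)) ^ 2) from by
      rw [Real.logb_pow]
      push_cast
      constructor <;> intro h <;> linarith]
    exact Real.logb_le_logb one_lt_two hA (by positivity)
  rw [key]
  have hq : ((se - s₂) ^ 2 / (P * (P + s₂)) - s₂ / P ≤ α) ↔
      (se - s₂) ^ 2 ≤ α * (P * (P + s₂)) + s₂ * (P + s₂) := by
    rw [sub_le_iff_le_add, div_le_iff₀ (by positivity)]
    have hq2 : (α + s₂ / P) * (P * (P + s₂)) = α * (P * (P + s₂)) + s₂ * (P + s₂) := by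
      field_simp
    rw [hq2]
  rw [ge_iff_le, hq, div_pow, div_le_div_iff₀ hd2 (by positivity)]
  have t1 : (0:ℝ) ≤ (P + 2 * s₂ - se) * (P + se) := mul_nonneg (by linarith) (by linarith)
  rcases eq_or_lt_of_le hα1 with h1 | h1
  · subst h1; constructor <;> intro _ <;> nlinarith [t1]
  · have h1' : (0:ℝ) < 1 - α := by linarith
    constructor <;> intro h <;> nlinarith [mul_pos hP h1', h]
end

section
/- (Core of Theorem 11: redundancy of the sum-rate bound, so inner and outer Gaussian bounds coincide.) For x ≥ 0, let C(x) = (1/2)·log₂(1+x). Let s₁, s₂, s_e be real numbers with 0 < s₁ ≤ s₂ ≤ s_e, and let P > 0 satisfy P ≥ s_e(s_e − 2s₂)/s₂. Let α ∈ [0, 1] and R₁, R₂ ≥ 0 satisfy R₁ ≤ C(αP/s₁) − C(αP/s_e) + C((1−α)P/(αP + s₂)) − C((1−α)P/(αP + s_e)) and R₂ ≤ C((1−α)P/(αP + s₂)) − C((1−α)P/(αP + s_e)). Then R₁ + R₂ ≤ C(αP/s₁) − C(αP/s_e) + C((1−α)P/(αP + s₂)). -/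
theorem Cfun_le_two_mul_Cfun {x y : ℝ} (hx : 0 < 1 + x) (h : 1 + x ≤ (1 + y) ^ 2) :
    Cfun x ≤ 2 * Cfun y := by
  have hlog : Real.logb 2 (1 + x) ≤ 2 * Real.logb 2 (1 + y) := by
    calc Real.logb 2 (1 + x) ≤ Real.logb 2 ((1 + y) ^ 2) :=
          Real.logb_le_logb_of_le (by norm_num) hx h
      _ = 2 * Real.logb 2 (1 + y) := by
          rw [Real.logb, Real.logb, Real.log_pow]; push_cast; ring
  unfold Cfun
  linarith

theorem one_add_sub_div_add {P t s : ℝ} (h : t + s ≠ 0) :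
    1 + (P - t) / (t + s) = (P + s) / (t + s) := by
  field_simp
  ring

theorem add_div_add_le_sq_add_div_add {P t s₂ se : ℝ} (hs₂ : 0 < s₂) (hse : 0 < se)
    (ht₀ : 0 ≤ t) (htP : t ≤ P) (hpow : se * (se - 2 * s₂) ≤ s₂ * P) :
    (P + s₂) / (t + s₂) ≤ ((P + se) / (t + se)) ^ 2 := by
  have gap : (P + se) ^ 2 * (t + s₂) - (P + s₂) * (t + se) ^ 2
      = (P - t) * ((P + s₂) * t + (s₂ * P - se * (se - 2 * s₂))) := by ring
  have gap_nonneg : 0 ≤ (P - t) * ((P + s₂) * t + (s₂ * P - se * (se - 2 * s₂))) :=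
    mul_nonneg (by linarith) (add_nonneg (mul_nonneg (by linarith) ht₀) (by linarith))
  rw [div_pow, div_le_div_iff₀ (by linarith) (by positivity)]
  linarith

theorem Cfun_sub_div_le_two_mul_Cfun {P t s₂ se : ℝ} (hs₂ : 0 < s₂) (hse : 0 < se)
    (ht₀ : 0 ≤ t) (htP : t ≤ P) (hpow : se * (se - 2 * s₂) ≤ s₂ * P) :
    Cfun ((P - t) / (t + s₂)) ≤ 2 * Cfun ((P - t) / (t + se)) := by
  apply Cfun_le_two_mul_Cfun
  · exact add_pos_of_pos_of_nonneg one_pos (div_nonneg (by linarith) (by linarith))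
  · rw [one_add_sub_div_add (by linarith), one_add_sub_div_add (by linarith)]
    exact add_div_add_le_sq_add_div_add hs₂ hse ht₀ htP hpow

theorem sum_rate_redundant_general
    (s₁ s₂ se P α R₁ R₂ : ℝ)
    (hs₁ : 0 < s₁) (h12 : s₁ ≤ s₂) (h2e : s₂ ≤ se) (hP : 0 < P)
    (hpow : P ≥ se * (se - 2 * s₂) / s₂)
    (hα : α ∈ Set.Icc (0 : ℝ) 1)
    (hR₁ : R₁ ≤ Cfun (α * P / s₁) - Cfun (α * P / se)
        + Cfun ((1 - α) * P / (α * P + s₂)) - Cfun ((1 - α) * P / (α * P + se)))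
    (hR₂ : R₂ ≤ Cfun ((1 - α) * P / (α * P + s₂)) - Cfun ((1 - α) * P / (α * P + se))) :
    R₁ + R₂ ≤ Cfun (α * P / s₁) - Cfun (α * P / se)
        + Cfun ((1 - α) * P / (α * P + s₂)) := by
  obtain ⟨hα₀, hα₁⟩ := hα
  have hs₂ : 0 < s₂ := hs₁.trans_le h12
  have hpow' : se * (se - 2 * s₂) ≤ s₂ * P := by
    rw [ge_iff_le, div_le_iff₀ hs₂] at hpow
    linarith
  have hkey := Cfun_sub_div_le_two_mul_Cfun hs₂ (hs₂.trans_le h2e)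
    (mul_nonneg hα₀ hP.le) (mul_le_of_le_one_left hP.le hα₁) hpow'
  rw [show (1 - α) * P = P - α * P by ring] at hR₁ hR₂ ⊢
  linarith

/-- Core of Theorem 11: under the power condition `P ≥ s_e(s_e−2s₂)/s₂`, the sum-rate
bound of the inner region (55) is implied by the two individual rate bounds, so the
inner and outer Gaussian bounds coincide. -/
theorem sum_rate_redundant
    (s₁ s₂ se P α R₁ R₂ : ℝ)
    (hs₁ : 0 < s₁) (h12 : s₁ ≤ s₂) (h2e : s₂ ≤ se) (hP : 0 < P)
    (hpow : P ≥ se * (se - 2 * s₂) / s₂)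
    (hα : α ∈ Set.Icc (0 : ℝ) 1) (hR₁0 : 0 ≤ R₁) (hR₂0 : 0 ≤ R₂)
    (hR₁ : R₁ ≤ Cfun (α * P / s₁) - Cfun (α * P / se)
        + Cfun ((1 - α) * P / (α * P + s₂)) - Cfun ((1 - α) * P / (α * P + se)))
    (hR₂ : R₂ ≤ Cfun ((1 - α) * P / (α * P + s₂)) - Cfun ((1 - α) * P / (α * P + se))) :
    R₁ + R₂ ≤ Cfun (α * P / s₁) - Cfun (α * P / se)
        + Cfun ((1 - α) * P / (α * P + s₂)) :=
  sum_rate_redundant_general s₁ s₂ se P α R₁ R₂ hs₁ h12 h2e hP hpow hα hR₁ hR₂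
end

section
/- (Constant gap, second case of Appendix K.) For x ≥ 0, let C(x) = (1/2)·log₂(1+x). Let s₂, s_e, P be real numbers with 0 < s₂ ≤ s_e ≤ P + 2s₂ and P > 0. Then for every α with 0 ≤ α ≤ (s_e − s₂)²/(P(P + s₂)) − s₂/P, one has C(αP/s_e) ≤ 1/2. -/
/-- Constant gap, second case of Appendix K: if `s₂ ≤ s_e ≤ P + 2s₂` then for every
`α` with `0 ≤ α ≤ (s_e−s₂)²/(P(P+s₂)) − s₂/P` one has `C(αP/s_e) ≤ 1/2`. -/
theorem constant_gap_case2
    (s₂ se P : ℝ) (hs₂ : 0 < s₂) (h2e : s₂ ≤ se) (heP : se ≤ P + 2 * s₂) (hP : 0 < P) :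
    ∀ α : ℝ, 0 ≤ α → α ≤ (se - s₂) ^ 2 / (P * (P + s₂)) - s₂ / P →
      Cfun (α * P / se) ≤ 1 / 2 := by
  intro α hα0 hα2
  have hse : 0 < se := lt_of_lt_of_le hs₂ h2e
  have hPs : 0 < P * (P + s₂) := by positivity
  have h1 : (α + s₂ / P) * (P * (P + s₂)) ≤ (se - s₂) ^ 2 := by
    have h : α + s₂ / P ≤ (se - s₂) ^ 2 / (P * (P + s₂)) := by linarith
    exact (le_div_iff₀ hPs).mp h
  have h2 : s₂ / P * P = s₂ := div_mul_cancel₀ _ hP.ne'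
  have key : α * P ≤ se := by nlinarith [sq_nonneg (se - s₂), mul_pos hP hs₂]
  have hx : α * P / se ≤ 1 := (div_le_one hse).mpr key
  have hx0 : 0 ≤ α * P / se := by positivity
  have hlog : Real.logb 2 (1 + α * P / se) ≤ 1 := by
    calc Real.logb 2 (1 + α * P / se) ≤ Real.logb 2 2 :=
          Real.logb_le_logb_of_le (by norm_num) (by positivity) (by linarith)
      _ = 1 := Real.logb_self_eq_one (by norm_num)
  unfold Cfun
  linarith
end

section
/- (Strict version of condition (72) in Appendix K.) For x ≥ 0, let C(x) = (1/2)·log₂(1+x). Let s₂, s_e, P be real numbers with 0 < s₂ ≤ s_e, P > 0 and s_e ≥ P + 2s₂. Then for every α with 0 ≤ α < 1, C((1−α)P/(αP + s_e)) < C((1−α)P/(αP + s₂)) − C((1−α)P/(αP + s_e)); equivalently 2·C((1−α)P/(αP + s_e)) < C((1−α)P/(αP + s₂)). -/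
/-- Strict version of condition (72) in Appendix K: if `s_e ≥ P + 2s₂` then for every
`0 ≤ α < 1`,
`C((1−α)P/(αP+s_e)) < C((1−α)P/(αP+s₂)) − C((1−α)P/(αP+s_e))`;
equivalently `2·C((1−α)P/(αP+s_e)) < C((1−α)P/(αP+s₂))`. -/
theorem strict_condition72
    (s₂ se P : ℝ) (hs₂ : 0 < s₂) (h2e : s₂ ≤ se) (hP : 0 < P) (hse : se ≥ P + 2 * s₂) :
    ∀ α : ℝ, 0 ≤ α → α < 1 →
      (Cfun ((1 - α) * P / (α * P + se))
          < Cfun ((1 - α) * P / (α * P + s₂)) - Cfun ((1 - α) * P / (α * P + se)) ∧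
        2 * Cfun ((1 - α) * P / (α * P + se)) < Cfun ((1 - α) * P / (α * P + s₂))) := by
  intro α hα0 hα1
  set A := α * P with hA
  set Q := (1 - α) * P with hQdef
  have hA0 : 0 ≤ A := by positivity
  have hQ : 0 < Q := by
    have : 0 < 1 - α := by linarith
    positivity
  have hAQ : A + Q = P := by ring
  have h1 : 0 < A + se := by linarith
  have h2 : 0 < A + s₂ := by linarith
  have key : (1 + Q / (A + se)) ^ 2 < 1 + Q / (A + s₂) := by
    rw [show (1 + Q / (A + se)) = (A + se + Q) / (A + se) by field_simp,
        show (1 + Q / (A + s₂)) = (A + s₂ + Q) / (A + s₂) by field_simp,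
        div_pow, div_lt_div_iff₀ (by positivity) h2]
    have hse' : se ≥ A + Q + 2 * s₂ := by linarith
    nlinarith [mul_pos hQ hQ, mul_pos hQ h1, mul_pos hQ h2,
      mul_nonneg (mul_nonneg hQ.le h1.le) (by linarith : (0:ℝ) ≤ se - 2 * s₂ - A - Q)]
  have hx : 0 < 1 + Q / (A + se) := by positivity
  have hlog := Real.logb_lt_logb (by norm_num : (1:ℝ) < 2) (by positivity) key
  rw [Real.logb_pow] at hlog
  simp only [Cfun]
  push_cast at hlog
  constructor <;> linarith
end
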